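/- arXiv:1904.03700 — 2 statements merged into one kernel-verified Lean document; each statement's English description precedes it below -/
import Mathlib

section
/- Let wts(c, i) = c + C·(c − i) with constant C = 1 and suppose transactions T_i and T_j satisfy c_j ≤ c_i + L for some positive bound L. If wts(c_j, i_j) ≥ wts(c_i, i_i), then i_j ≤ i_i + 2L. -/
/-- With `wts c i = c + C·(c − i)`, `C = 1`, `L > 0`, and `c_j ≤ c_i + L`:
if `wts(c_j, i_j) ≥ wts(c_i, i_i)` then `i_j ≤ i_i + 2L`. -/
theorem stmt_4 (L i_i c_i i_j c_j : ℝ) (hL : 0 < L)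
    (hi : i_i ≤ c_i) (hj : i_j ≤ c_j)
    (hlife : c_j ≤ c_i + L)
    (hwts : c_j + 1 * (c_j - i_j) ≥ c_i + 1 * (c_i - i_i)) :
    i_j ≤ i_i + 2 * L := by linarith
end

section
/- If a relation R on a finite set is acyclic (its transitive closure is irreflexive), then R extends to a strict linear order; consequently any history whose combined real-time/return-value-from/multi-version graph is acyclic has an equivalent serial order respecting all three relations. -/
/-!
Acyclicity makes reachability `ReflTransGen R` antisymmetric, so it is a partial order in which
every `R`-edge is strict. Szpilrajn's theorem extends it to a linear order, whose strict part is
the required strict total order.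
-/

namespace Relation

variable {α : Type*} {R : α → α → Prop}

theorem ReflTransGen.antisymm_of_irreflexive_transGen (hacyc : Irreflexive (TransGen R))
    {a b : α} (hab : ReflTransGen R a b) (hba : ReflTransGen R b a) : a = b := by
  rcases reflTransGen_iff_eq_or_transGen.mp hab with rfl | hab
  · rfl
  · exact (hacyc a (hab.trans_left hba)).elim

abbrev reachabilityPartialOrder (hacyc : Irreflexive (TransGen R)) : PartialOrder α where
  le := ReflTransGen R
  le_refl _ := ReflTransGen.refl
  le_trans _ _ _ := ReflTransGen.trans
  le_antisymm _ _ := ReflTransGen.antisymm_of_irreflexive_transGen hacyc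

theorem reachabilityPartialOrder_lt_of_rel (hacyc : Irreflexive (TransGen R)) {a b : α}
    (hab : R a b) : (reachabilityPartialOrder hacyc).lt a b :=
  let _ := reachabilityPartialOrder hacyc
  lt_of_le_not_ge (ReflTransGen.single hab) fun hba => hacyc a (TransGen.head' hab hba)

end Relation

theorem stmt_19_general (V : Type) (R : V → V → Prop)
    (hacyc : Irreflexive (Relation.TransGen R)) :
    ∃ r : V → V → Prop, IsStrictTotalOrder V r ∧ ∀ u v, R u v → r u v := by
  let _ := Relation.reachabilityPartialOrder hacyc
  have hmono : StrictMono (toLinearExtension : V →o LinearExtension V) :=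
    toLinearExtension.monotone.strictMono_of_injective fun _ _ h => h
  exact ⟨fun u v => toLinearExtension u < toLinearExtension v,
    inferInstanceAs (IsStrictTotalOrder (LinearExtension V) (· < ·)),
    fun u v huv => hmono (Relation.reachabilityPartialOrder_lt_of_rel hacyc huv)⟩

/-- Order-extension principle: if a relation `R` on a finite set is acyclic
(its transitive closure is irreflexive), then `R` extends to a strict total
(linear) order; topologically sorting the acyclic opacity graph yields an
equivalent serial order respecting all the relations. -/
theorem stmt_19 (V : Type) [Fintype V] (R : V → V → Prop)
    (hacyc : Irreflexive (Relation.TransGen R)) :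
    ∃ r : V → V → Prop, IsStrictTotalOrder V r ∧ ∀ u v, R u v → r u v :=
  stmt_19_general V R hacyc
end
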